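/- Let ρ = (ρ₁, ρ₂) with ρ₁, ρ₂ ≥ 2 be a pair of natural numbers. If complex numbers (a_β), indexed by β = (β₁,β₂) with β₁+β₂ ≤ 2, are such that the polynomial Q(z₁,z₂) = Σ_β a_β z₁^{ρ₁−β₁} z₂^{ρ₂−β₂} and all its partial derivatives of order at most 2 vanish at the point (1,1), then all a_β = 0. -/
import Mathlib

set_option maxHeartbeats 2000000

open MvPolynomial

/-- The polynomial `Q(z₁,z₂) = Σ_{|β| ≤ 2} a_β z₁^{ρ₁−β₁} z₂^{ρ₂−β₂}`. -/
noncomputable def Qpoly (ρ : ℕ × ℕ) (a : ℕ × ℕ → ℂ) : MvPolynomial (Fin 2) ℂ :=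
  ∑ β ∈ (Finset.range 3 ×ˢ Finset.range 3).filter (fun β => β.1 + β.2 ≤ 2),
    C (a β) * X 0 ^ (ρ.1 - β.1) * X 1 ^ (ρ.2 - β.2)

theorem stmt_8 (ρ : ℕ × ℕ) (h1 : 2 ≤ ρ.1) (h2 : 2 ≤ ρ.2) (a : ℕ × ℕ → ℂ)
    (hvan : ∀ γ : ℕ × ℕ, γ.1 + γ.2 ≤ 2 →
      eval (fun _ => (1 : ℂ))
        ((⇑(pderiv (0 : Fin 2)))^[γ.1] ((⇑(pderiv (1 : Fin 2)))^[γ.2] (Qpoly ρ a))) = 0) :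
    ∀ β : ℕ × ℕ, β.1 + β.2 ≤ 2 → a β = 0 := by
  obtain ⟨p, q⟩ := ρ
  simp only at h1 h2
  obtain ⟨m, rfl⟩ : ∃ m, p = m + 2 := ⟨p - 2, by omega⟩
  obtain ⟨n, rfl⟩ : ∃ n, q = n + 2 := ⟨q - 2, by omega⟩
  have Qex : Qpoly (m+2, n+2) a
      = C (a (0,0)) * X 0 ^ (m+2) * X 1 ^ (n+2)
      + C (a (0,1)) * X 0 ^ (m+2) * X 1 ^ (n+1)
      + C (a (0,2)) * X 0 ^ (m+2) * X 1 ^ n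
      + C (a (1,0)) * X 0 ^ (m+1) * X 1 ^ (n+2)
      + C (a (1,1)) * X 0 ^ (m+1) * X 1 ^ (n+1)
      + C (a (2,0)) * X 0 ^ m * X 1 ^ (n+2) := by
    have hs : (Finset.range 3 ×ˢ Finset.range 3).filter (fun β => β.1 + β.2 ≤ 2)
        = {(0,0),(0,1),(0,2),(1,0),(1,1),(2,0)} := by decide
    rw [Qpoly, hs, Finset.sum_insert (by decide), Finset.sum_insert (by decide),
      Finset.sum_insert (by decide), Finset.sum_insert (by decide),
      Finset.sum_insert (by decide), Finset.sum_singleton]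
    norm_num
    ring
  have h00 := hvan (0,0) (by norm_num)
  have h10 := hvan (1,0) (by norm_num)
  have h01 := hvan (0,1) (by norm_num)
  have h20 := hvan (2,0) (by norm_num)
  have h11 := hvan (1,1) (by norm_num)
  have h02 := hvan (0,2) (by norm_num)
  rw [Qex] at h00 h10 h01 h20 h11 h02
  simp only [Function.iterate_succ_apply', Function.iterate_zero_apply, Function.iterate_one,
    pderiv_mul, pderiv_pow, pderiv_X_self, pderiv_C, pderiv_X_of_ne (by decide : (0:Fin 2) ≠ 1),
    pderiv_X_of_ne (by decide : (1:Fin 2) ≠ 0), Derivation.map_natCast, map_add, map_ofNat,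
    map_natCast, eval_mul, eval_add, eval_pow, eval_X, eval_C, eval_zero, mul_zero, zero_mul,
    add_zero, zero_add, one_pow, mul_one, one_mul] at h00 h10 h01 h20 h11 h02
  push_cast at h00 h10 h01 h20 h11 h02
  have e20 : ((m:ℂ)) * ((m-1 : ℕ) : ℂ) = (m:ℂ) * ((m:ℂ) - 1) := by
    rcases m with _ | k
    · simp
    · push_cast [Nat.add_sub_cancel]; ring
  have e02 : ((n:ℂ)) * ((n-1 : ℕ) : ℂ) = (n:ℂ) * ((n:ℂ) - 1) := by
    rcases n with _ | k
    · simp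
    · push_cast [Nat.add_sub_cancel]; ring
  set M : ℂ := (m : ℂ) with hM
  set N : ℂ := (n : ℂ) with hN
  have hF : a (2,0) = 0 := by
    linear_combination ((M+1)*(M+2)/2) * h00 - (M+1) * h10 + h20/2 - (a (2,0)/2) * e20
  have hC : a (0,2) = 0 := by
    linear_combination ((N+1)*(N+2)/2) * h00 - (N+1) * h01 + h02/2 - (a (0,2)/2) * e02
  have hE : a (1,1) = 0 := by
    linear_combination h11 - (N+2) * h10 - (M+2) * h01 + (M+2)*(N+2) * h00
  have hD : a (1,0) = 0 := by
    linear_combination (M+2) * h00 - h10 - hE - 2 * hF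
  have hB : a (0,1) = 0 := by
    linear_combination (N+2) * h00 - h01 - hE - 2 * hC
  have hA : a (0,0) = 0 := by
    linear_combination h00 - hB - hC - hD - hE - hF
  rintro ⟨b1, b2⟩ hb
  have hb1 : b1 ≤ 2 := by omega
  have hb2 : b2 ≤ 2 := by omega
  interval_cases b1 <;> interval_cases b2 <;>
    first
      | exact hA | exact hB | exact hC | exact hD | exact hE | exact hF
      | exact absurd hb (by omega)
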